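/- arXiv:1508.05033 — 3 statements merged into one kernel-verified Lean document; each statement's English description precedes it below -/
import Mathlib

section
/- Let Γ be a group with a finite generating set and word metric d. The cocycle b : Γ → ℓ^∞(Γ), b(g) = (h ↦ d(g,h) − d(e,h)), is proper: ‖b(g)‖_∞ = d(e,g), hence ‖b(g)‖_∞ → ∞ as d(e,g) → ∞. Consequently, every finitely generated group admits a proper isometric affine action on ℓ^∞(Γ) (property PL^∞). -/
open scoped ENNReal

/-- `dist` on `Γ` is the word metric associated with the finite generating set `S`. -/
def IsWordMetric {Γ : Type*} [Group Γ] [MetricSpace Γ] (S : Set Γ) : Prop :=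
  S.Finite ∧ Subgroup.closure S = ⊤ ∧
    ∀ g h : Γ, dist g h = sInf {t : ℝ | ∃ w : List Γ,
      (w.length : ℝ) = t ∧ (∀ x ∈ w, x ∈ S ∨ x⁻¹ ∈ S) ∧ g⁻¹ * h = w.prod}

/-!
The map `g ↦ (h ↦ d(g,h) - d(e,h))` is the Kuratowski embedding of `Γ` into `ℓ^∞(Γ)` based at `e`.
Evaluating at `h = g` and the triangle inequality give `‖b g‖ = d(e,g)`; left invariance of the
word metric turns the equivariance of the embedding into the cocycle identity. Properness holds
because balls of the word metric are finite, consisting of products of boundedly many elements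
of the finite set `S ∪ S⁻¹`.
-/

open Filter

section Kuratowski

variable {X : Type*} [PseudoMetricSpace X]

lemma abs_dist_sub_dist_le (x₀ g h : X) : |dist g h - dist x₀ h| ≤ dist x₀ g := by
  simpa only [dist_comm g] using abs_dist_sub_le g x₀ h

def kuratowskiMap (x₀ g : X) : lp (fun _ : X => ℝ) ∞ :=
  ⟨fun h => dist g h - dist x₀ h,
    memℓp_infty ⟨dist x₀ g, by rintro _ ⟨h, rfl⟩; exact abs_dist_sub_dist_le x₀ g h⟩⟩

@[simp]
lemma kuratowskiMap_apply (x₀ g h : X) :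
    (kuratowskiMap x₀ g : X → ℝ) h = dist g h - dist x₀ h :=
  rfl

lemma norm_kuratowskiMap (x₀ g : X) : ‖kuratowskiMap x₀ g‖ = dist x₀ g := by
  refine le_antisymm (lp.norm_le_of_forall_le dist_nonneg fun h => ?_) ?_
  · exact abs_dist_sub_dist_le x₀ g h
  · calc dist x₀ g = ‖(kuratowskiMap x₀ g : X → ℝ) g‖ := by
          simp [abs_of_nonneg dist_nonneg]
      _ ≤ ‖kuratowskiMap x₀ g‖ := lp.norm_apply_le_norm ENNReal.top_ne_zero _ g

lemma kuratowskiMap_one_mul_apply {Γ : Type*} [Group Γ] [PseudoMetricSpace Γ]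
    [IsIsometricSMul Γ Γ] (g h k : Γ) :
    (kuratowskiMap 1 (g * h) : Γ → ℝ) k
      = (kuratowskiMap 1 h : Γ → ℝ) (g⁻¹ * k) + (kuratowskiMap 1 g : Γ → ℝ) k := by
  have hgh : dist (g * h) k = dist h (g⁻¹ * k) := by
    rw [← dist_mul_left g h, mul_inv_cancel_left]
  have hone : dist 1 (g⁻¹ * k) = dist g k := by
    rw [← dist_mul_left g, mul_one, mul_inv_cancel_left]
  simp only [kuratowskiMap_apply, hgh, hone]
  ring

end Kuratowski

lemma exists_list_prod_eq_of_closure_eq_top {Γ : Type*} [Group Γ] {S : Set Γ}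
    (hS : Subgroup.closure S = ⊤) (x : Γ) :
    ∃ w : List Γ, (∀ a ∈ w, a ∈ S ∨ a⁻¹ ∈ S) ∧ w.prod = x := by
  have hx : x ∈ Submonoid.closure (S ∪ S⁻¹) := by
    rw [← Subgroup.closure_toSubmonoid, hS]
    trivial
  exact Submonoid.exists_list_of_mem_closure hx

namespace IsWordMetric

variable {Γ : Type*} [Group Γ] [MetricSpace Γ] {S : Set Γ}

lemma isIsometricSMul (hS : IsWordMetric S) : IsIsometricSMul Γ Γ :=
  ⟨fun k => Isometry.of_dist_eq fun g h => by
    rw [smul_eq_mul, smul_eq_mul, hS.2.2, hS.2.2, mul_inv_rev, mul_assoc, inv_mul_cancel_left]⟩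

lemma exists_list_length_eq_dist (hS : IsWordMetric S) (g : Γ) :
    ∃ w : List Γ, (w.length : ℝ) = dist 1 g ∧ (∀ a ∈ w, a ∈ S ∨ a⁻¹ ∈ S) ∧ g = w.prod := by
  set lengths := {n : ℕ | ∃ w : List Γ, w.length = n ∧ (∀ a ∈ w, a ∈ S ∨ a⁻¹ ∈ S) ∧ g = w.prod}
  have hne : lengths.Nonempty := by
    obtain ⟨w, hw, hprod⟩ := exists_list_prod_eq_of_closure_eq_top hS.2.1 g
    exact ⟨w.length, w, rfl, hw, hprod.symm⟩
  have himage : {t : ℝ | ∃ w : List Γ, (w.length : ℝ) = t ∧ (∀ a ∈ w, a ∈ S ∨ a⁻¹ ∈ S) ∧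
      1⁻¹ * g = w.prod} = Nat.cast '' lengths := by
    ext t
    simp only [inv_one, one_mul, Set.mem_image, lengths]
    grind
  obtain ⟨w, hlen, hw, hprod⟩ := Nat.sInf_mem hne
  refine ⟨w, ?_, hw, hprod⟩
  rw [hS.2.2, himage, ← Nat.mono_cast.map_csInf_of_continuousAt
    continuous_of_discreteTopology.continuousAt hne, hlen]

lemma finite_setOf_dist_one_le (hS : IsWordMetric S) (r : ℝ) : {g : Γ | dist 1 g ≤ r}.Finite := by
  have : Finite ↥(S ∪ S⁻¹) := (hS.1.union hS.1.inv).to_subtype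
  refine ((List.finite_length_le ↥(S ∪ S⁻¹) ⌊r⌋₊).image
    fun l => (l.map (↑)).prod).subset fun g hg => ?_
  obtain ⟨w, hlen, hw, rfl⟩ := hS.exists_list_length_eq_dist g
  lift w to List ↥(S ∪ S⁻¹) using hw
  refine ⟨w, ?_, rfl⟩
  rw [Set.mem_ofPred_eq, ← List.length_map, Nat.le_floor_iff (dist_nonneg.trans hg)]
  exact hlen.trans_le hg

lemma tendsto_dist_one_cofinite_atTop (hS : IsWordMetric S) :
    Tendsto (dist (1 : Γ)) cofinite atTop :=
  tendsto_atTop.2 fun r => eventually_cofinite.2 <|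
    (hS.finite_setOf_dist_one_le r).subset fun _ hg => (not_le.1 hg).le

end IsWordMetric

/-- The cocycle b(g) = (h ↦ d(g,h) − d(e,h)) for the left regular representation on ℓ^∞(Γ)
is proper: ‖b(g)‖_∞ = d(e,g); consequently every finitely generated group admits a proper
isometric affine action on ℓ^∞(Γ), i.e. has property PL^∞. -/
theorem stmt2 {Γ : Type*} [Group Γ] [MetricSpace Γ] (S : Set Γ) (hS : IsWordMetric S) :
    ∃ b : Γ → lp (fun _ : Γ => ℝ) ∞,
      (∀ g h : Γ, (b g : ∀ _ : Γ, ℝ) h = dist g h - dist (1 : Γ) h) ∧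
      (∀ g h k : Γ, (b (g * h) : ∀ _ : Γ, ℝ) k
        = (b h : ∀ _ : Γ, ℝ) (g⁻¹ * k) + (b g : ∀ _ : Γ, ℝ) k) ∧
      (∀ g : Γ, ‖b g‖ = dist (1 : Γ) g) ∧
      Filter.Tendsto (fun g : Γ => ‖b g‖) Filter.cofinite Filter.atTop := by
  have := hS.isIsometricSMul
  refine ⟨kuratowskiMap 1, kuratowskiMap_apply 1, kuratowskiMap_one_mul_apply,
    norm_kuratowskiMap 1, ?_⟩
  simpa only [norm_kuratowskiMap] using hS.tendsto_dist_one_cofinite_atTop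
end

section
/- In the setting of the fibred-coarse-embedding construction: fix r, a finite quotient X = Γ/Γ_{n_r} contained in X∖K_r with quotient map r-isometric, and for z ∈ X let C_z be the r-ball around z. Define c^z(x) = t_{C_z}(z)(s(z)) − t_{C_z}(zx)(s(zx)) for d(e,x) < r and c^z(x) = 0 otherwise, and let ρ_{C_z C_{zy}} be the linear part of the affine isometry t_{C_z C_{zy}}. Then for all x, y with d(e,x) < r, d(e,y) < r, and d(e,yx) < r, and all z ∈ X: ρ_{C_z C_{zy}}(c^{zy}(x)) + c^z(y) = c^z(yx). -/
/-! Write `P(w) = t_{C_z}(w)(s(w))`, so that `c^z(x) = P(z) - P(zx)` when `d(e,x) < r`. Both `zy` and `zyx` lie in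
the overlap `C_z ∩ C_{zy}`, where the charts of `C_{zy}` and `C_z` differ by the transition isometry
`t_{C_z C_{zy}}`; its linear part therefore carries `c^{zy}(x)` to `P(zy) - P(zyx)`, and the identity
becomes the telescoping sum `(P(zy) - P(zyx)) + (P(z) - P(zy)) = P(z) - P(zyx)`. -/

section LeftInvariantMetric

variable {X : Type*} [Group X] [PseudoMetricSpace X]

theorem dist_mul_self_of_dist_mul_left_eq
    (hinv : ∀ g x y : X, dist (g * x) (g * y) = dist x y) (z x : X) :
    dist (z * x) z = dist 1 x := by
  rw [dist_comm, ← hinv z 1 x, mul_one]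

theorem mul_mem_ball_self_of_dist_mul_left_eq
    (hinv : ∀ g x y : X, dist (g * x) (g * y) = dist x y) {r : ℝ} (z : X) {x : X}
    (hx : dist 1 x < r) : z * x ∈ Metric.ball z r := by
  rwa [Metric.mem_ball, dist_mul_self_of_dist_mul_left_eq hinv]

end LeftInvariantMetric

theorem AffineIsometryEquiv.apply_apply_eq_of_apply_symm_eq {𝕜 V P : Type*} [NormedField 𝕜]
    [SeminormedAddCommGroup V] [NormedSpace 𝕜 V] [PseudoMetricSpace P] [NormedAddTorsor V P]
    {e f g : P ≃ᵃⁱ[𝕜] P} (h : ∀ v, e (f.symm v) = g v) (u : P) : g (f u) = e u := by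
  rw [← h, f.symm_apply_apply]

/-- The local cocycle identity for the vectors
`c^z(x) = t_{C_z}(z)(s(z)) − t_{C_z}(zx)(s(zx))` built from the trivializations of a
fibred coarse embedding: if `d(e,x), d(e,y), d(e,yx) < r` then
`ρ_{C_z C_{zy}}(c^{zy}(x)) + c^z(y) = c^z(yx)`, where `ρ_{C_z C_{zy}}` is the linear part
of the transition affine isometry `t_{C_z C_{zy}}`.

Here `X` is a group with a left-invariant metric (a finite quotient of Γ in the paper),
`C_z` is the `r`-ball around `z`, `t z w` is the trivialization `t_{C_z}(w) : B_w → B`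
(fibres realized as `B`), and `T z z'` is the transition isometry `t_{C_z C_{z'}}`,
characterized by `t_{C_z}(w) ∘ t_{C_{z'}}(w)⁻¹ = T z z'` for `w ∈ C_z ∩ C_{z'}`. -/
theorem stmt15 {X : Type*} [Group X] [MetricSpace X]
    (hinv : ∀ g x y : X, dist (g * x) (g * y) = dist x y)
    {B : Type*} [NormedAddCommGroup B] [NormedSpace ℝ B]
    (r : ℝ) (s : X → B)
    (t : X → X → (B ≃ᵃⁱ[ℝ] B)) (T : X → X → (B ≃ᵃⁱ[ℝ] B))
    (hT : ∀ z z' w : X, w ∈ Metric.ball z r ∩ Metric.ball z' r →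
      ∀ v : B, t z w ((t z' w).symm v) = T z z' v)
    (c : X → X → B)
    (hc : ∀ z x : X, c z x =
      if dist (1 : X) x < r then t z z (s z) - t z (z * x) (s (z * x)) else 0) :
    ∀ x y : X, dist (1 : X) x < r → dist (1 : X) y < r → dist (1 : X) (y * x) < r →
      ∀ z : X, (T z (z * y)).linearIsometryEquiv (c (z * y) x) + c z y = c z (y * x) := by
  intro x y hx hy hyx z
  have hzy : z * y ∈ Metric.ball z r ∩ Metric.ball (z * y) r :=
    ⟨mul_mem_ball_self_of_dist_mul_left_eq hinv z hy,
      Metric.mem_ball_self (dist_nonneg.trans_lt hx)⟩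
  have hzyx : z * y * x ∈ Metric.ball z r ∩ Metric.ball (z * y) r :=
    ⟨mul_assoc z y x ▸ mul_mem_ball_self_of_dist_mul_left_eq hinv z hyx,
      mul_mem_ball_self_of_dist_mul_left_eq hinv (z * y) hx⟩
  have change_chart : ∀ w ∈ Metric.ball z r ∩ Metric.ball (z * y) r,
      T z (z * y) (t (z * y) w (s w)) = t z w (s w) := fun w hw =>
    AffineIsometryEquiv.apply_apply_eq_of_apply_symm_eq (hT z (z * y) w hw) (s w)
  rw [hc, hc, hc, if_pos hx, if_pos hy, if_pos hyx, ← vsub_eq_sub (t _ (z * y) _),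
    (T z (z * y)).map_vsub, vsub_eq_sub, change_chart _ hzy, change_chart _ hzyx, mul_assoc]
  abel
end

section
/- Let Γ be a finitely generated group with word metric d and fix r > 0. Suppose π : Γ → X is a group homomorphism onto a finite group X with word metric, which is r-isometric on balls (restriction to any subset of diameter < r in Γ is an isometry onto its image). If τ is an r-locally isometric representation of X on a Banach space W (where X carries its own metric) and β is an r-locally cocycle for τ, then σ := τ ∘ π extended by Id outside the r-ball of Γ, and b := β ∘ π extended by 0 outside the r-ball of Γ, form an r-locally isometric representation of Γ on W and an r-locally cocycle with respect to σ. -/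
/-- An `r`-locally isometric affine action of `Γ` on `B`. -/
structure RLocalIsomAffAction (Γ : Type*) [Group Γ] [MetricSpace Γ] (r : ℝ)
    (B : Type*) [NormedAddCommGroup B] [NormedSpace ℝ B] where
  π : Γ → B → B
  b : Γ → B
  isom : ∀ g : Γ, dist (1 : Γ) g < r → Isometry (π g)
  bij : ∀ g : Γ, dist (1 : Γ) g < r → Function.Bijective (π g)
  map_add : ∀ g : Γ, dist (1 : Γ) g < r → ∀ u v : B, π g (u + v) = π g u + π g v
  map_smul : ∀ g : Γ, dist (1 : Γ) g < r → ∀ (c : ℝ) (v : B), π g (c • v) = c • π g v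
  mul : ∀ g h : Γ, dist (1 : Γ) g < r → dist (1 : Γ) h < r → dist (1 : Γ) (g * h) < r →
    ∀ v : B, π (g * h) v = π g (π h v)
  cocycle : ∀ g h : Γ, dist (1 : Γ) g < r → dist (1 : Γ) h < r →
    dist (1 : Γ) (g * h) < r → b (g * h) = π g (b h) + b g

/-! An `r`-isometric homomorphism maps the `r`-ball of `Γ` into the `r`-ball of `X`, and a product
`g * h` of elements of the `r`-ball that stays in the `r`-ball is sent to `φ g * φ h`, again in the
`r`-ball. So each local identity for `(σ, b)` is an instance of the corresponding identity for
`(τ, β)`; outside the `r`-ball nothing is required. -/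

theorem dist_map_eq_of_dist_lt {α β : Type*} [PseudoMetricSpace α] [PseudoMetricSpace β]
    {f : α → β} {r : ℝ}
    (hf : ∀ Y : Set α, Metric.diam Y < r → ∀ x ∈ Y, ∀ y ∈ Y, dist (f x) (f y) = dist x y)
    {x y : α} (hxy : dist x y < r) : dist (f x) (f y) = dist x y :=
  hf {x, y} (by rwa [Metric.diam_pair]) x (by simp) y (by simp)

namespace RLocalIsomAffAction

variable {Γ X W : Type*} [Group Γ] [MetricSpace Γ] [Group X] [MetricSpace X]
  [NormedAddCommGroup W] [NormedSpace ℝ W] {r : ℝ}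

noncomputable def comap (A : RLocalIsomAffAction X r W) (φ : Γ →* X)
    (hφ : ∀ g : Γ, dist (1 : Γ) g < r → dist (1 : X) (φ g) < r) :
    RLocalIsomAffAction Γ r W where
  π g := if dist (1 : Γ) g < r then A.π (φ g) else id
  b g := if dist (1 : Γ) g < r then A.b (φ g) else 0
  isom g hg := by
    simpa only [if_pos hg] using A.isom (φ g) (hφ g hg)
  bij g hg := by
    simpa only [if_pos hg] using A.bij (φ g) (hφ g hg)
  map_add g hg := by
    simpa only [if_pos hg] using A.map_add (φ g) (hφ g hg)
  map_smul g hg := by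
    simpa only [if_pos hg] using A.map_smul (φ g) (hφ g hg)
  mul g h hg hh hgh v := by
    have hφgh := hφ (g * h) hgh
    rw [map_mul] at hφgh
    simpa only [if_pos hg, if_pos hh, if_pos hgh, map_mul] using
      A.mul (φ g) (φ h) (hφ g hg) (hφ h hh) hφgh v
  cocycle g h hg hh hgh := by
    have hφgh := hφ (g * h) hgh
    rw [map_mul] at hφgh
    simpa only [if_pos hg, if_pos hh, if_pos hgh, map_mul] using
      A.cocycle (φ g) (φ h) (hφ g hg) (hφ h hh) hφgh

end RLocalIsomAffAction

theorem stmt19_general {Γ : Type*} [Group Γ] [MetricSpace Γ]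
    {X : Type*} [Group X] [MetricSpace X]
    (φ : Γ →* X) (r : ℝ)
    (hiso : ∀ Y : Set Γ, Metric.diam Y < r → ∀ g ∈ Y, ∀ h ∈ Y, dist (φ g) (φ h) = dist g h)
    {W : Type*} [NormedAddCommGroup W] [NormedSpace ℝ W]
    (A₀ : RLocalIsomAffAction X r W)
    (σ : Γ → W → W) (b : Γ → W)
    (hσ : ∀ g : Γ, σ g = if dist (1 : Γ) g < r then A₀.π (φ g) else id)
    (hb : ∀ g : Γ, b g = if dist (1 : Γ) g < r then A₀.b (φ g) else 0) :
    ∃ A : RLocalIsomAffAction Γ r W, A.π = σ ∧ A.b = b := by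
  have hball : ∀ g : Γ, dist (1 : Γ) g < r → dist (1 : X) (φ g) < r := fun g hg => by
    rwa [← map_one φ, dist_map_eq_of_dist_lt hiso hg]
  exact ⟨A₀.comap φ hball, funext fun g => (hσ g).symm, funext fun g => (hb g).symm⟩

/-- Lifting an `r`-locally isometric affine action through an `r`-isometric quotient map:
if `φ : Γ → X` is a surjective homomorphism onto a finite group which restricts to an
isometry on every subset of `Γ` of diameter `< r`, and `(τ, β)` is an `r`-locally
isometric affine action of `X` on `W`, then `σ = τ ∘ φ` (extended by the identity outside
the `r`-ball) and `b = β ∘ φ` (extended by `0`) form an `r`-locally isometric affine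
action of `Γ` on `W`. -/
theorem stmt19 {Γ : Type*} [Group Γ] [MetricSpace Γ] (S : Set Γ) (hS : IsWordMetric S)
    {X : Type*} [Group X] [Fintype X] [MetricSpace X]
    (φ : Γ →* X) (hsurj : Function.Surjective φ) (r : ℝ)
    (hiso : ∀ Y : Set Γ, Metric.diam Y < r → ∀ g ∈ Y, ∀ h ∈ Y, dist (φ g) (φ h) = dist g h)
    {W : Type*} [NormedAddCommGroup W] [NormedSpace ℝ W]
    (A₀ : RLocalIsomAffAction X r W)
    (σ : Γ → W → W) (b : Γ → W)
    (hσ : ∀ g : Γ, σ g = if dist (1 : Γ) g < r then A₀.π (φ g) else id)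
    (hb : ∀ g : Γ, b g = if dist (1 : Γ) g < r then A₀.b (φ g) else 0) :
    ∃ A : RLocalIsomAffAction Γ r W, A.π = σ ∧ A.b = b :=
  stmt19_general φ r hiso A₀ σ b hσ hb
end
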